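/- arXiv:1303.1560 — 2 statements merged into one kernel-verified Lean document; each statement's English description precedes it below -/
import Mathlib

section
/- Let ω ∈ Ω, q ≥ 1, and let h_q = b_ω, c_ω, or d_ω according as the q-th letter ω_q of ω equals 2, 1, or 0. Then for every g ∈ G_ω and every geodesic representation g = s_1⋯s_n (n = |g|, s_i ∈ A_ω), one has L_q(g) ≤ |g| + 1 − #{i : s_i = h_q}. -/
open Equiv Filter MeasureTheory Real Set

noncomputable section

/-- The space of sequences over the alphabet `{0,1,2}`. -/
abbrev Om : Type := ℕ → Fin 3

/-- The shift transformation. -/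
def shift (ω : Om) : Om := fun n => ω (n + 1)

/-- Sequences in which each letter occurs infinitely often. -/
def OmInf : Set Om := {ω | ∀ j : Fin 3, ∀ N : ℕ, ∃ n, N ≤ n ∧ ω n = j}

/-- The automorphism of the binary rooted tree flipping the first letter (the generator `a`). -/
def flipFirst : List Bool → List Bool
  | [] => []
  | x :: v => (!x) :: v

lemma flipFirst_invol : Function.Involutive flipFirst := by
  intro v; cases v <;> simp [flipFirst]

/-- "Spinal" automorphisms of the binary rooted tree: at each vertex `1^k0` the section is `a`
if `act k` holds, the identity otherwise. -/
def spineMap : (ℕ → Bool) → List Bool → List Bool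
  | _, [] => []
  | act, false :: v => false :: (if act 0 then flipFirst v else v)
  | act, true :: v => true :: spineMap (fun n => act (n + 1)) v

lemma spineMap_invol (act : ℕ → Bool) : Function.Involutive (spineMap act) := by
  intro v
  induction v generalizing act with
  | nil => rfl
  | cons x v ih =>
    cases x with
    | false => by_cases h : act 0 <;> simp [spineMap, h, flipFirst_invol v]
    | true => simp [spineMap, ih]

/-- The generator `a` as a permutation of the vertex set of the binary rooted tree. -/
def aPerm : Equiv.Perm (List Bool) := Function.Involutive.toPerm _ flipFirst_invol

/-- The generator `b_ω`. -/
def bPerm (ω : Om) : Equiv.Perm (List Bool) :=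
  Function.Involutive.toPerm _ (spineMap_invol fun n => decide (ω n ≠ 2))

/-- The generator `c_ω`. -/
def cPerm (ω : Om) : Equiv.Perm (List Bool) :=
  Function.Involutive.toPerm _ (spineMap_invol fun n => decide (ω n ≠ 1))

/-- The generator `d_ω`. -/
def dPerm (ω : Om) : Equiv.Perm (List Bool) :=
  Function.Involutive.toPerm _ (spineMap_invol fun n => decide (ω n ≠ 0))

/-- The generating set `A_ω = {a, b_ω, c_ω, d_ω}`. -/
def gens (ω : Om) : Set (Equiv.Perm (List Bool)) := {aPerm, bPerm ω, cPerm ω, dPerm ω}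

/-- The Grigorchuk group `G_ω`. -/
def Gw (ω : Om) : Subgroup (Equiv.Perm (List Bool)) := Subgroup.closure (gens ω)

/-- Word length of a tree map relative to the generating set `A_ω`. -/
def wordLength (ω : Om) (f : List Bool → List Bool) : ℕ :=
  sInf {n | ∃ l : List (Equiv.Perm (List Bool)),
    (∀ s ∈ l, s ∈ gens ω) ∧ l.length = n ∧ ⇑l.prod = f}

/-- The ball of radius `n` in `G_ω` with respect to `A_ω`. -/
def ball (ω : Om) (n : ℕ) : Set (Equiv.Perm (List Bool)) :=
  {g | ∃ l : List (Equiv.Perm (List Bool)),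
    (∀ s ∈ l, s ∈ gens ω) ∧ l.length ≤ n ∧ l.prod = g}

/-- The growth function `γ_ω` of the group `G_ω` with respect to `A_ω`. -/
def growth (ω : Om) (n : ℕ) : ℕ := (ball ω n).ncard

end

noncomputable section

/-- The section `g_w` of a tree automorphism `g` at the vertex `w`:
`g(w ++ v) = g(w) ++ g_w(v)`. -/
def sectionMap (g : Equiv.Perm (List Bool)) (w : List Bool) : List Bool → List Bool :=
  fun v => (g (w ++ v)).drop w.length

open Classical in
/-- The number of occurrences of `x` in the list `l`. -/
def countOf (x : Equiv.Perm (List Bool)) (l : List (Equiv.Perm (List Bool))) : ℕ :=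
  l.countP fun s => decide (s = x)

/-- `L_q(g) = Σ_{w ∈ {0,1}^q} |g_w|`, word lengths of the sections being taken in
`G_{τ^q ω}` with respect to `A_{τ^q ω}`. -/
def Lq (ω : Om) (q : ℕ) (g : Equiv.Perm (List Bool)) : ℕ :=
  ∑ w : Fin q → Bool, wordLength (shift^[q] ω) (sectionMap g (List.ofFn w))

end

/-- The generator `h_q`: `b_ω`, `c_ω` or `d_ω` according as the `q`-th letter `ω_q`
(1-indexed) equals 2, 1 or 0. -/
noncomputable def hGen (ω : Om) (q : ℕ) : Equiv.Perm (List Bool) :=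
  if ω (q - 1) = 2 then bPerm ω else if ω (q - 1) = 1 then cPerm ω else dPerm ω

/-!
Sections compose along the tree, `(s g)_w = s_{g(w)} ∘ g_w`, and `g` permutes every level, so
`L_q` is subadditive along a word. On level `q ≥ 1` the letter `a` has only trivial sections,
while a letter `x ∈ {b_ω, c_ω, d_ω}` has at most two nontrivial ones: a generator at `1^q` and
`a` at `1^(q-1) 0`, the latter missing for `x = h_q`. Hence
`L_q(g) + #{i : sᵢ = h_q} ≤ 2 · #{i : sᵢ ≠ a}`. Since `b_ω, c_ω, d_ω` form a Klein four-group
with `1`, no two of them are adjacent in a geodesic word, so `2 · #{i : sᵢ ≠ a} ≤ |g| + 1`.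
-/

def fnSection (f : List Bool → List Bool) (w : List Bool) : List Bool → List Bool :=
  fun v => (f (w ++ v)).drop w.length

lemma fnSection_nil (f : List Bool → List Bool) : fnSection f [] = f := rfl

lemma fnSection_append (f : List Bool → List Bool) (u w : List Bool) :
    fnSection f (u ++ w) = fnSection (fnSection f u) w := by
  funext v
  simp [fnSection, List.drop_drop]

lemma fnSection_id (w : List Bool) : fnSection id w = id := by
  funext v
  simp [fnSection]

lemma fnSection_flipFirst_cons (x : Bool) (w : List Bool) :
    fnSection flipFirst (x :: w) = id := by
  funext v
  simp [fnSection, flipFirst]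

lemma fnSection_spineMap_true (act : ℕ → Bool) :
    fnSection (spineMap act) [true] = spineMap fun n => act (n + 1) := by
  funext v
  simp [fnSection, spineMap]

lemma fnSection_spineMap_false (act : ℕ → Bool) :
    fnSection (spineMap act) [false] = if act 0 then flipFirst else id := by
  funext v
  by_cases h : act 0 <;> simp [fnSection, spineMap, h]

structure IsTreeMap (f : List Bool → List Bool) : Prop where
  length_apply : ∀ v, (f v).length = v.length
  take_apply_append : ∀ w v, (f (w ++ v)).take w.length = f w

namespace IsTreeMap

variable {f g : List Bool → List Bool}

lemma apply_append (hf : IsTreeMap f) (w v : List Bool) :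
    f (w ++ v) = f w ++ fnSection f w v := by
  rw [← hf.take_apply_append w v]
  exact (List.take_append_drop _ _).symm

protected lemma id : IsTreeMap id :=
  ⟨fun _ => rfl, fun _ _ => List.take_left' rfl⟩

lemma comp (hf : IsTreeMap f) (hg : IsTreeMap g) : IsTreeMap (f ∘ g) := by
  refine ⟨fun v => (hf.length_apply _).trans (hg.length_apply v), fun w v => ?_⟩
  rw [Function.comp_apply, hg.apply_append, ← hg.length_apply w, hf.take_apply_append]
  rfl

lemma fnSection_comp (hf : IsTreeMap f) (hg : IsTreeMap g) (w : List Bool) :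
    fnSection (f ∘ g) w = fnSection f (g w) ∘ fnSection g w := by
  funext v
  have hlen : (f (g w)).length = w.length := (hf.length_apply _).trans (hg.length_apply w)
  change (f (g (w ++ v))).drop w.length = _
  rw [hg.apply_append, hf.apply_append, List.drop_left' hlen]
  rfl

end IsTreeMap

lemma isTreeMap_flipFirst : IsTreeMap flipFirst := by
  refine ⟨fun v => by cases v <;> rfl, fun w v => ?_⟩
  cases w <;> simp [flipFirst]

lemma isTreeMap_spineMap (act : ℕ → Bool) : IsTreeMap (spineMap act) := by
  refine ⟨fun v => ?_, fun w v => ?_⟩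
  · induction v generalizing act with
    | nil => rfl
    | cons x v ih =>
      cases x
      · by_cases h : act 0 <;> simp [spineMap, h, isTreeMap_flipFirst.length_apply]
      · simp [spineMap, ih]
  · induction w generalizing act with
    | nil => rfl
    | cons x w ih =>
      cases x
      · by_cases h : act 0 <;> simp [spineMap, h, isTreeMap_flipFirst.take_apply_append]
      · simp [spineMap, ih]

lemma spineMap_comp_spineMap (act act' : ℕ → Bool) :
    spineMap act ∘ spineMap act' = spineMap fun n => xor (act n) (act' n) := by
  funext v
  induction v generalizing act act' with
  | nil => rfl
  | cons x v ih =>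
    cases x
    · by_cases h : act 0 <;> by_cases h' : act' 0 <;>
        simp [spineMap, h, h', flipFirst_invol v]
    · simpa [spineMap] using ih _ _

lemma spineMap_false : spineMap (fun _ => false) = id := by
  funext v
  induction v with
  | nil => rfl
  | cons x v ih => cases x <;> simp [spineMap, ih]

lemma flipFirst_ne_spineMap (act : ℕ → Bool) : flipFirst ≠ spineMap act := fun h => by
  simpa [flipFirst, spineMap] using congrFun h [true]

lemma shift_iterate_apply (ω : Om) (q n : ℕ) : shift^[q] ω n = ω (n + q) := by
  induction q generalizing n with
  | zero => rfl
  | succ q ih =>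
    rw [Function.iterate_succ_apply', shift, ih]
    ring_nf

-- `spinalGen ω 2 = b_ω`, `spinalGen ω 1 = c_ω`, `spinalGen ω 0 = d_ω`.
def spinalGen (ω : Om) (j : Fin 3) : Equiv.Perm (List Bool) :=
  Function.Involutive.toPerm _ (spineMap_invol fun n => decide (ω n ≠ j))

lemma coe_spinalGen (ω : Om) (j : Fin 3) :
    ⇑(spinalGen ω j) = spineMap fun n => decide (ω n ≠ j) := rfl

lemma coe_aPerm : ⇑aPerm = flipFirst := rfl

lemma mem_gens_iff {ω : Om} {s : Equiv.Perm (List Bool)} :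
    s ∈ gens ω ↔ s = aPerm ∨ ∃ j, s = spinalGen ω j := by
  simp only [gens, Set.mem_insert_iff, Set.mem_singleton_iff]
  constructor
  · rintro (h | h | h | h)
    exacts [Or.inl h, Or.inr ⟨2, h⟩, Or.inr ⟨1, h⟩, Or.inr ⟨0, h⟩]
  · rintro (h | ⟨j, rfl⟩)
    · exact Or.inl h
    · fin_cases j
      exacts [Or.inr (Or.inr (Or.inr rfl)), Or.inr (Or.inr (Or.inl rfl)), Or.inr (Or.inl rfl)]

lemma aPerm_mem_gens (ω : Om) : aPerm ∈ gens ω := mem_gens_iff.2 (Or.inl rfl)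

lemma spinalGen_mem_gens (ω : Om) (j : Fin 3) : spinalGen ω j ∈ gens ω :=
  mem_gens_iff.2 (Or.inr ⟨j, rfl⟩)

lemma aPerm_ne_spinalGen (ω : Om) (j : Fin 3) : aPerm ≠ spinalGen ω j := fun h =>
  flipFirst_ne_spineMap _ (congrArg DFunLike.coe h)

lemma hGen_succ (ω : Om) (q : ℕ) : hGen ω (q + 1) = spinalGen ω (ω q) := by
  simp only [hGen, Nat.add_sub_cancel]
  generalize ω q = y
  fin_cases y <;> rfl

-- `b_ω, c_ω, d_ω` and `1` form a Klein four-group; for `j ≠ k`, `-(j + k)` is the third index.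
lemma spinalGen_mul_spinalGen (ω : Om) (j k : Fin 3) :
    spinalGen ω j * spinalGen ω k = if j = k then 1 else spinalGen ω (-(j + k)) := by
  apply DFunLike.coe_injective
  rw [Equiv.Perm.coe_mul, coe_spinalGen, coe_spinalGen, spineMap_comp_spineMap]
  split_ifs with hjk
  · subst hjk
    simp [spineMap_false]
  · rw [coe_spinalGen]
    congr 1
    funext n
    generalize ω n = y
    revert y j k
    decide

lemma isTreeMap_of_mem_gens {ω : Om} {s : Equiv.Perm (List Bool)} (hs : s ∈ gens ω) :
    IsTreeMap ⇑s := by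
  rcases mem_gens_iff.1 hs with rfl | ⟨j, rfl⟩
  exacts [isTreeMap_flipFirst, isTreeMap_spineMap _]

lemma isTreeMap_prod {ω : Om} {l : List (Equiv.Perm (List Bool))}
    (hl : ∀ s ∈ l, s ∈ gens ω) : IsTreeMap ⇑l.prod := by
  induction l with
  | nil => exact IsTreeMap.id
  | cons s t ih =>
    rw [List.forall_mem_cons] at hl
    rw [List.prod_cons, Equiv.Perm.coe_mul]
    exact (isTreeMap_of_mem_gens hl.1).comp (ih hl.2)

-- `wordLength ν f` is the junk value `sInf ∅ = 0` unless `IsGenProd ν f`.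
def IsGenProd (ν : Om) (f : List Bool → List Bool) : Prop :=
  ∃ l : List (Equiv.Perm (List Bool)), (∀ s ∈ l, s ∈ gens ν) ∧ ⇑l.prod = f

lemma wordLength_le_length {ν : Om} {f : List Bool → List Bool}
    {l : List (Equiv.Perm (List Bool))} (hl : ∀ s ∈ l, s ∈ gens ν) (hf : ⇑l.prod = f) :
    wordLength ν f ≤ l.length :=
  Nat.sInf_le ⟨l, hl, rfl, hf⟩

lemma wordLength_id (ν : Om) : wordLength ν id = 0 :=
  Nat.le_zero.1 (wordLength_le_length (l := []) (by simp) rfl)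

lemma wordLength_le_one_of_mem_gens {ν : Om} {s : Equiv.Perm (List Bool)} (hs : s ∈ gens ν) :
    wordLength ν ⇑s ≤ 1 :=
  wordLength_le_length (l := [s]) (by simpa using hs) (by simp)

namespace IsGenProd

variable {ν : Om} {f g : List Bool → List Bool}

protected lemma id (ν : Om) : IsGenProd ν id := ⟨[], by simp, rfl⟩

lemma of_mem_gens {s : Equiv.Perm (List Bool)} (hs : s ∈ gens ν) : IsGenProd ν ⇑s :=
  ⟨[s], by simpa using hs, by simp⟩

lemma exists_length_eq_wordLength (hf : IsGenProd ν f) :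
    ∃ l : List (Equiv.Perm (List Bool)),
      (∀ s ∈ l, s ∈ gens ν) ∧ l.length = wordLength ν f ∧ ⇑l.prod = f := by
  obtain ⟨l, hl, hlf⟩ := hf
  exact Nat.sInf_mem (s := {n | ∃ l : List (Equiv.Perm (List Bool)),
    (∀ s ∈ l, s ∈ gens ν) ∧ l.length = n ∧ ⇑l.prod = f})
    ⟨l.length, l, hl, rfl, hlf⟩

lemma comp (hf : IsGenProd ν f) (hg : IsGenProd ν g) : IsGenProd ν (f ∘ g) := by
  obtain ⟨l, hl, rfl⟩ := hf
  obtain ⟨m, hm, rfl⟩ := hg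
  refine ⟨l ++ m, fun s hs => ?_, by simp⟩
  rcases List.mem_append.1 hs with h | h
  exacts [hl s h, hm s h]

lemma wordLength_comp_le (hf : IsGenProd ν f) (hg : IsGenProd ν g) :
    wordLength ν (f ∘ g) ≤ wordLength ν f + wordLength ν g := by
  obtain ⟨l, hl, hl_len, rfl⟩ := hf.exists_length_eq_wordLength
  obtain ⟨m, hm, hm_len, rfl⟩ := hg.exists_length_eq_wordLength
  rw [← hl_len, ← hm_len, ← List.length_append]
  refine wordLength_le_length (fun s hs => ?_) (by simp)
  rcases List.mem_append.1 hs with h | h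
  exacts [hl s h, hm s h]

end IsGenProd

lemma fnSection_of_mem_gens {ω : Om} {s : Equiv.Perm (List Bool)} (hs : s ∈ gens ω)
    (w : List Bool) :
    fnSection ⇑s w = id ∨ ∃ t ∈ gens (shift^[w.length] ω), fnSection ⇑s w = ⇑t := by
  induction w generalizing ω s with
  | nil => exact Or.inr ⟨s, hs, rfl⟩
  | cons x w ih =>
    have hx : fnSection ⇑s [x] = id ∨ ∃ t ∈ gens (shift ω), fnSection ⇑s [x] = ⇑t := by
      rcases mem_gens_iff.1 hs with rfl | ⟨j, rfl⟩
      · exact Or.inl (fnSection_flipFirst_cons x [])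
      cases x
      · rw [coe_spinalGen, fnSection_spineMap_false]
        split_ifs
        exacts [Or.inr ⟨aPerm, aPerm_mem_gens _, rfl⟩, Or.inl rfl]
      · exact Or.inr
          ⟨spinalGen (shift ω) j, spinalGen_mem_gens _ _, fnSection_spineMap_true _⟩
    rw [List.length_cons, Function.iterate_succ_apply, show x :: w = [x] ++ w from rfl,
      fnSection_append]
    rcases hx with hx | ⟨t, ht, hx⟩
    · exact Or.inl (by rw [hx, fnSection_id])
    · rw [hx]
      exact ih ht

lemma isGenProd_fnSection_of_mem_gens {ω : Om} {s : Equiv.Perm (List Bool)} (hs : s ∈ gens ω)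
    (w : List Bool) : IsGenProd (shift^[w.length] ω) (fnSection ⇑s w) := by
  rcases fnSection_of_mem_gens hs w with h | ⟨t, ht, h⟩
  exacts [h ▸ IsGenProd.id _, h ▸ IsGenProd.of_mem_gens ht]

lemma isGenProd_fnSection_prod {ω : Om} {l : List (Equiv.Perm (List Bool))}
    (hl : ∀ s ∈ l, s ∈ gens ω) (w : List Bool) :
    IsGenProd (shift^[w.length] ω) (fnSection ⇑l.prod w) := by
  induction l generalizing w with
  | nil => exact fnSection_id w ▸ IsGenProd.id _
  | cons s t ih =>
    rw [List.forall_mem_cons] at hl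
    have hsec := isGenProd_fnSection_of_mem_gens hl.1 (t.prod w)
    rw [(isTreeMap_prod hl.2).length_apply] at hsec
    rw [List.prod_cons, Equiv.Perm.coe_mul,
      (isTreeMap_of_mem_gens hl.1).fnSection_comp (isTreeMap_prod hl.2)]
    exact hsec.comp (ih hl.2 w)

noncomputable def levelLength (ν : Om) (q : ℕ) (f : List Bool → List Bool) : ℕ :=
  ∑ w : Fin q → Bool, wordLength ν (fnSection f (List.ofFn w))

lemma Lq_eq_levelLength (ω : Om) (q : ℕ) (g : Equiv.Perm (List Bool)) :
    Lq ω q g = levelLength (shift^[q] ω) q ⇑g := rfl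

section levelLength

variable (ν : Om)

lemma levelLength_zero (f : List Bool → List Bool) : levelLength ν 0 f = wordLength ν f := by
  simp [levelLength, fnSection_nil]

lemma levelLength_succ (q : ℕ) (f : List Bool → List Bool) :
    levelLength ν (q + 1) f =
      levelLength ν q (fnSection f [true]) + levelLength ν q (fnSection f [false]) := by
  rw [levelLength, ← (Fin.consEquiv fun _ => Bool).sum_comp, Fintype.sum_prod_type,
    Fintype.sum_bool]
  simp [Fin.consEquiv, levelLength, ← fnSection_append]

lemma levelLength_id (q : ℕ) : levelLength ν q id = 0 := by
  simp [levelLength, fnSection_id, wordLength_id]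

lemma levelLength_flipFirst (q : ℕ) : levelLength ν (q + 1) flipFirst = 0 := by
  simp [levelLength_succ, fnSection_flipFirst_cons, levelLength_id]

-- A spinal map has only two nontrivial sections on level `q + 1`: at `1^(q+1)` and at `1^q 0`.
lemma levelLength_spineMap (q : ℕ) (act : ℕ → Bool) :
    levelLength ν (q + 1) (spineMap act) =
      wordLength ν (spineMap fun n => act (n + (q + 1))) +
        if act q then wordLength ν flipFirst else 0 := by
  induction q generalizing act with
  | zero =>
    rw [levelLength_succ, fnSection_spineMap_true, fnSection_spineMap_false, levelLength_zero,
      levelLength_zero]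
    split_ifs <;> simp [wordLength_id]
  | succ q ih =>
    rw [levelLength_succ, fnSection_spineMap_true, fnSection_spineMap_false, ih]
    split_ifs <;> simp [levelLength_flipFirst, levelLength_id, Nat.add_assoc]

end levelLength

lemma exists_perm_ofFn {g : List Bool → List Bool} (hg : ∀ v, (g v).length = v.length)
    (hinj : g.Injective) (q : ℕ) :
    ∃ σ : Equiv.Perm (Fin q → Bool), ∀ w, List.ofFn (σ w) = g (List.ofFn w) := by
  let φ : (Fin q → Bool) → Fin q → Bool := fun w i => (g (List.ofFn w)).getD i false
  have hφ : ∀ w, List.ofFn (φ w) = g (List.ofFn w) := fun w => by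
    have hlen : (g (List.ofFn w)).length = q := by rw [hg, List.length_ofFn]
    refine List.ext_getElem (by simp [hlen]) fun i h _ => ?_
    simp only [List.getElem_ofFn, φ]
    exact List.getD_eq_getElem _ _ (by simpa [hlen] using h)
  have hφinj : φ.Injective := fun w w' h =>
    List.ofFn_injective (hinj (by rw [← hφ, ← hφ, h]))
  exact ⟨Equiv.ofBijective φ (Finite.injective_iff_bijective.1 hφinj), hφ⟩

lemma levelLength_comp_le {ν : Om} {q : ℕ} {f : List Bool → List Bool}
    {g : Equiv.Perm (List Bool)} (hf : IsTreeMap f) (hg : IsTreeMap ⇑g)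
    (hfs : ∀ w : List Bool, w.length = q → IsGenProd ν (fnSection f w))
    (hgs : ∀ w : List Bool, w.length = q → IsGenProd ν (fnSection ⇑g w)) :
    levelLength ν q (f ∘ ⇑g) ≤ levelLength ν q f + levelLength ν q ⇑g := by
  obtain ⟨σ, hσ⟩ := exists_perm_ofFn hg.length_apply g.injective q
  calc levelLength ν q (f ∘ ⇑g)
      ≤ ∑ w : Fin q → Bool, (wordLength ν (fnSection f (List.ofFn (σ w))) +
          wordLength ν (fnSection g (List.ofFn w))) := by
        refine Finset.sum_le_sum fun w _ => ?_
        rw [hf.fnSection_comp hg, ← hσ]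
        exact (hfs _ List.length_ofFn).wordLength_comp_le (hgs _ List.length_ofFn)
    _ = levelLength ν q f + levelLength ν q ⇑g := by
        rw [Finset.sum_add_distrib,
          Equiv.sum_comp σ fun w => wordLength ν (fnSection f (List.ofFn w))]
        rfl

lemma levelLength_spinalGen_le (ω : Om) (q : ℕ) (j : Fin 3) :
    levelLength (shift^[q + 1] ω) (q + 1) ⇑(spinalGen ω j) ≤
      1 + if ω q = j then 0 else 1 := by
  have htail : (spineMap fun n => decide (ω (n + (q + 1)) ≠ j)) =
      ⇑(spinalGen (shift^[q + 1] ω) j) := by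
    rw [coe_spinalGen]
    simp only [shift_iterate_apply]
  have hb := wordLength_le_one_of_mem_gens (spinalGen_mem_gens (shift^[q + 1] ω) j)
  have ha : wordLength (shift^[q + 1] ω) flipFirst ≤ 1 :=
    wordLength_le_one_of_mem_gens (aPerm_mem_gens _)
  rw [coe_spinalGen, levelLength_spineMap, htail]
  by_cases h : ω q = j
  · simp only [h, ne_eq, not_true_eq_false, decide_false, Bool.false_eq_true, if_false, if_true]
    omega
  · simp only [h, ne_eq, not_false_eq_true, decide_true, if_false, if_true]
    omega

open Classical in
lemma countOf_singleton (x s : Equiv.Perm (List Bool)) :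
    countOf x [s] = if s = x then 1 else 0 := by
  simp [countOf]

lemma countOf_cons (x s : Equiv.Perm (List Bool)) (l : List (Equiv.Perm (List Bool))) :
    countOf x (s :: l) = countOf x [s] + countOf x l :=
  List.countP_append (l₁ := [s])

-- `h_{q+1}` acts trivially below `1^q 0`, so it has only one nontrivial section on level `q + 1`.
lemma levelLength_add_countOf_singleton_le {ω : Om} {s : Equiv.Perm (List Bool)}
    (hs : s ∈ gens ω) (q : ℕ) :
    levelLength (shift^[q + 1] ω) (q + 1) ⇑s + countOf (hGen ω (q + 1)) [s] +
      2 * countOf aPerm [s] ≤ 2 := by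
  rw [hGen_succ]
  rcases mem_gens_iff.1 hs with rfl | ⟨j, rfl⟩
  · simp [countOf_singleton, coe_aPerm, levelLength_flipFirst, aPerm_ne_spinalGen]
  have hne : spinalGen ω j ≠ aPerm := (aPerm_ne_spinalGen ω j).symm
  rw [countOf_singleton, countOf_singleton, if_neg hne]
  split_ifs with h
  · have hωq := levelLength_spinalGen_le ω q (ω q)
    rw [if_pos rfl, ← h] at hωq
    omega
  · have hj := levelLength_spinalGen_le ω q j
    split_ifs at hj <;> omega

lemma levelLength_prod_add_countOf_le {ω : Om} (q : ℕ) {l : List (Equiv.Perm (List Bool))}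
    (hl : ∀ s ∈ l, s ∈ gens ω) :
    levelLength (shift^[q + 1] ω) (q + 1) ⇑l.prod + countOf (hGen ω (q + 1)) l +
      2 * countOf aPerm l ≤ 2 * l.length := by
  induction l with
  | nil => simp [levelLength_id, countOf]
  | cons s t ih =>
    rw [List.forall_mem_cons] at hl
    have hcomp := levelLength_comp_le (ν := shift^[q + 1] ω) (q := q + 1)
      (isTreeMap_of_mem_gens hl.1) (isTreeMap_prod hl.2)
      (fun w hw => hw ▸ isGenProd_fnSection_of_mem_gens hl.1 w)
      (fun w hw => hw ▸ isGenProd_fnSection_prod hl.2 w)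
    have hs := levelLength_add_countOf_singleton_le hl.1 q
    have ht := ih hl.2
    rw [List.prod_cons, Equiv.Perm.coe_mul, countOf_cons (hGen ω (q + 1)) s t,
      countOf_cons aPerm s t, List.length_cons]
    omega

lemma List.length_le_two_mul_countP_add_one_of_isChain {α : Type*} (p : α → Bool)
    {l : List α} (hl : l.IsChain fun x y => p x ∨ p y) : l.length ≤ 2 * l.countP p + 1 := by
  induction l using List.twoStepInduction with
  | nil => simp
  | singleton x => simp
  | cons_cons x y l ih _ =>
    have hxy : p x ∨ p y := (List.isChain_cons_cons.1 hl).1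
    have := ih hl.tail.tail
    simp only [List.length_cons, List.countP_cons]
    rcases hxy with h | h <;> simp only [h, if_true] <;> split_ifs <;> omega

lemma exists_length_le_one_prod_eq_mul {ω : Om} {s t : Equiv.Perm (List Bool)}
    (hs : s ∈ gens ω) (ht : t ∈ gens ω) (hsa : s ≠ aPerm) (hta : t ≠ aPerm) :
    ∃ u : List (Equiv.Perm (List Bool)),
      (∀ x ∈ u, x ∈ gens ω) ∧ u.length ≤ 1 ∧ u.prod = s * t := by
  obtain ⟨j, rfl⟩ := (mem_gens_iff.1 hs).resolve_left hsa
  obtain ⟨k, rfl⟩ := (mem_gens_iff.1 ht).resolve_left hta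
  rw [spinalGen_mul_spinalGen]
  split_ifs
  · exact ⟨[], by simp, by simp, rfl⟩
  · exact ⟨[spinalGen ω (-(j + k))], by simpa using spinalGen_mem_gens _ _, by simp, by simp⟩

lemma isChain_of_length_eq_wordLength {ω : Om} {l : List (Equiv.Perm (List Bool))}
    (hl : ∀ s ∈ l, s ∈ gens ω) (hgeo : l.length = wordLength ω ⇑l.prod) :
    l.IsChain fun s t => s = aPerm ∨ t = aPerm := by
  refine List.isChain_iff_forall_rel_of_append_cons_cons.2 fun s t l₁ l₂ hl₁₂ => ?_
  subst hl₁₂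
  by_contra! hst
  have hmem : ∀ x ∈ l₁ ++ s :: t :: l₂, x ∈ gens ω := hl
  obtain ⟨u, hu, hu_len, hu_prod⟩ := exists_length_le_one_prod_eq_mul (hmem s (by simp))
    (hmem t (by simp)) hst.1 hst.2
  have hshort := wordLength_le_length (ν := ω) (l := l₁ ++ u ++ l₂)
    (fun x hx => by
      simp only [List.mem_append] at hx
      rcases hx with (hx | hx) | hx
      exacts [hmem x (by simp [hx]), hu x hx, hmem x (by simp [hx])])
    (f := ⇑(l₁ ++ s :: t :: l₂).prod) (by simp [hu_prod, mul_assoc])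
  simp only [List.length_append, List.length_cons] at hgeo hshort
  omega

open Classical in
lemma length_le_two_mul_countOf_aPerm_add_one {ω : Om} {l : List (Equiv.Perm (List Bool))}
    (hl : ∀ s ∈ l, s ∈ gens ω) (hgeo : l.length = wordLength ω ⇑l.prod) :
    l.length ≤ 2 * countOf aPerm l + 1 :=
  List.length_le_two_mul_countP_add_one_of_isChain _
    ((isChain_of_length_eq_wordLength hl hgeo).imp fun s t h => by simpa using h)

theorem statement14_general (ω : Om) (q : ℕ) (hq : 1 ≤ q)
    (g : Equiv.Perm (List Bool))
    (l : List (Equiv.Perm (List Bool))) (hmem : ∀ s ∈ l, s ∈ gens ω)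
    (hprod : l.prod = g) (hgeo : l.length = wordLength ω ⇑g) :
    (Lq ω q g : ℝ) ≤ (wordLength ω ⇑g : ℝ) + 1 - (countOf (hGen ω q) l : ℝ) := by
  obtain ⟨p, rfl⟩ : ∃ p, q = p + 1 := ⟨q - 1, by omega⟩
  subst hprod
  have hlevel := levelLength_prod_add_countOf_le p hmem
  have hgeodesic := length_le_two_mul_countOf_aPerm_add_one hmem hgeo
  rw [← Lq_eq_levelLength] at hlevel
  have : Lq ω (p + 1) l.prod + countOf (hGen ω (p + 1)) l ≤ wordLength ω ⇑l.prod + 1 := by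
    omega
  rw [le_sub_iff_add_le]
  exact_mod_cast this

/-- Let `q ≥ 1` and let `h_q` be `b_ω`, `c_ω` or `d_ω` according as
`ω_q = 2, 1, 0`. Then for every `g ∈ G_ω` and every geodesic representation `g = s₁⋯sₙ`,
`L_q(g) ≤ |g| + 1 − #{i : sᵢ = h_q}`. -/
theorem statement14 (ω : Om) (q : ℕ) (hq : 1 ≤ q)
    (g : Equiv.Perm (List Bool)) (hg : g ∈ Gw ω)
    (l : List (Equiv.Perm (List Bool))) (hmem : ∀ s ∈ l, s ∈ gens ω)
    (hprod : l.prod = g) (hgeo : l.length = wordLength ω ⇑g) :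
    (Lq ω q g : ℝ) ≤ (wordLength ω ⇑g : ℝ) + 1 - (countOf (hGen ω q) l : ℝ) :=
  statement14_general ω q hq g l hmem hprod hgeo
end

section
/- Let G be a group generated by a tuple A = (a_1, …, a_k) and also generated by a tuple B = (b_1, …, b_n). Let A' = (a_1, …, a_k, 1, …, 1) ∈ G^{k+n} be A with n identity entries appended, and let B' = (b_1, …, b_n, 1, …, 1) ∈ G^{n+k} be B with k identity entries appended. Then A' can be transformed into B' by a finite sequence of Nielsen transformations. -/
/-!
Nielsen moves are reversible enough that an entry `tᵢ` may be multiplied on the right by any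
element of the subgroup generated by the other entries. Hence, if the entries on a fixed set of
positions generate `G`, every remaining entry can be overwritten by an arbitrary element, one
position at a time. Starting from `(a, 1)`, keep `a` and overwrite the padding by `b`; then keep
`b` and overwrite `a` by `1`; finally permute `(1, b)` into `(b, 1)` by swaps.
-/

/-- An elementary Nielsen transformation on an `m`-tuple of elements of a group `G`:
(i) exchanging two entries, (ii) replacing an entry by its inverse, (iii) replacing an
entry `gᵢ` by `gᵢgⱼ` for some `j ≠ i`. -/
inductive NielsenStep {G : Type*} [Group G] {m : ℕ} : (Fin m → G) → (Fin m → G) → Prop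
  | swap (t : Fin m → G) (i j : Fin m) : NielsenStep t (t ∘ Equiv.swap i j)
  | inv (t : Fin m → G) (i : Fin m) : NielsenStep t (Function.update t i (t i)⁻¹)
  | mul (t : Fin m → G) (i j : Fin m) (hij : i ≠ j) :
      NielsenStep t (Function.update t i (t i * t j))

theorem Fin.append_comp_finAddFlip {α : Type*} {m n : ℕ} (u : Fin m → α) (v : Fin n → α) :
    Fin.append u v ∘ finAddFlip = Fin.append v u := by
  funext j
  refine Fin.addCases (fun i => ?_) (fun i => ?_) j <;>
    simp [finAddFlip_apply_castAdd, finAddFlip_apply_natAdd]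

namespace NielsenStep

open Relation Function Subgroup

variable {G : Type*} [Group G] {m : ℕ}

theorem reflTransGen_comp_perm (t : Fin m → G) (σ : Equiv.Perm (Fin m)) :
    ReflTransGen NielsenStep t (t ∘ σ) := by
  induction σ using Equiv.Perm.swap_induction_on generalizing t with
  | one => rfl
  | swap_mul σ i j _ ih => exact .head (.swap t i j) (ih _)

/-- The move `tᵢ ↦ tᵢ tⱼ⁻¹`, realised as `tⱼ ↦ tⱼ⁻¹`, `tᵢ ↦ tᵢ tⱼ`, `tⱼ ↦ tⱼ⁻¹`. -/
theorem reflTransGen_update_mul_inv (t : Fin m → G) {i j : Fin m} (hij : i ≠ j) :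
    ReflTransGen NielsenStep t (update t i (t i * (t j)⁻¹)) := by
  set t₁ := update t j (t j)⁻¹
  set t₂ := update t₁ i (t₁ i * t₁ j)
  have ht₂ : update t₂ j (t₂ j)⁻¹ = update t i (t i * (t j)⁻¹) := by
    funext x
    rcases eq_or_ne x j with rfl | hxj
    · simp [t₂, t₁, hij.symm]
    · rcases eq_or_ne x i with rfl | hxi <;> simp [t₂, t₁, *]
  exact .head (.inv t j) (.head (.mul t₁ i j hij) (ht₂ ▸ .single (.inv t₂ j)))

theorem reflTransGen_update_mul_of_mem_closure (t : Fin m → G) (i : Fin m) {g : G}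
    (hg : g ∈ closure (t '' {i}ᶜ)) :
    ReflTransGen NielsenStep t (update t i (t i * g)) := by
  suffices h : ∀ c, ReflTransGen NielsenStep (update t i c) (update t i (c * g)) by
    simpa using h (t i)
  induction hg using closure_induction'' with
  | mem _ hx =>
    obtain ⟨j, hji : j ≠ i, rfl⟩ := hx
    intro c
    have step := NielsenStep.mul (update t i c) i j hji.symm
    simpa [hji] using ReflTransGen.single step
  | inv_mem _ hx =>
    obtain ⟨j, hji : j ≠ i, rfl⟩ := hx
    intro c
    simpa [hji] using reflTransGen_update_mul_inv (update t i c) hji.symm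
  | one => exact fun c => by rw [mul_one]
  | mul x y _ _ ihx ihy => exact fun c => (ihx c).trans (mul_assoc c x y ▸ ihy (c * x))

theorem reflTransGen_of_eqOn {t s : Fin m → G} {K : Set (Fin m)}
    (hK : closure (t '' K) = ⊤) (hts : Set.EqOn t s K) :
    ReflTransGen NielsenStep t s := by
  classical
  replace hK : closure (s '' K) = ⊤ := hts.image_eq ▸ hK
  suffices h : ∀ (F : Finset (Fin m)) (u : Fin m → G), Set.EqOn u s K →
      (∀ i ∉ F, u i = s i) → ReflTransGen NielsenStep u s from
    h Finset.univ t hts (by simp)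
  intro F
  induction F using Finset.induction_on with
  | empty => exact fun u _ hus => funext (fun i => hus i (Finset.notMem_empty i)) ▸ .refl
  | insert i F _ ih =>
    intro u huK hus
    have hg : (u i)⁻¹ * s i ∈ closure (u '' {i}ᶜ) := by
      by_cases hiK : i ∈ K
      · simp [huK hiK]
      · have hKi : K ⊆ {i}ᶜ := fun j hj (hji : j = i) => hiK (hji ▸ hj)
        rw [← huK.image_eq] at hK
        exact (hK.ge.trans (closure_mono (Set.image_mono hKi))) (mem_top _)
    refine (mul_inv_cancel_left (u i) (s i) ▸
      reflTransGen_update_mul_of_mem_closure u i hg).trans (ih _ ?_ ?_)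
    · intro j hj
      rcases eq_or_ne j i with rfl | hji <;> simp [huK hj, *]
    · intro j hj
      rcases eq_or_ne j i with rfl | hji
      · simp
      · simpa [hji] using hus j (by simp [hji, hj])

end NielsenStep

open NielsenStep in
/-- Let `G` be generated by the tuple `A = (a₁,…,a_k)` and also by the
tuple `B = (b₁,…,bₙ)`. Let `A' ∈ G^{k+n}` be `A` with `n` identity entries appended and
`B' ∈ G^{n+k}` be `B` with `k` identity entries appended. Then `A'` can be transformed into
`B'` by a finite sequence of Nielsen transformations. -/
theorem statement19 {G : Type*} [Group G] (k n : ℕ)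
    (a : Fin k → G) (b : Fin n → G)
    (ha : Subgroup.closure (Set.range a) = ⊤)
    (hb : Subgroup.closure (Set.range b) = ⊤) :
    Relation.ReflTransGen (NielsenStep (G := G) (m := k + n))
      (Fin.append a fun _ : Fin n => (1 : G))
      (fun i : Fin (k + n) =>
        Fin.append b (fun _ : Fin k => (1 : G)) (Fin.cast (Nat.add_comm k n) i)) := by
  have keep_a : Relation.ReflTransGen NielsenStep (Fin.append a 1) (Fin.append a b) :=
    reflTransGen_of_eqOn (K := Set.range (Fin.castAdd n))
      (by simpa [← Set.range_comp, Function.comp_def] using ha) (by rintro _ ⟨i, rfl⟩; simp)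
  have keep_b : Relation.ReflTransGen NielsenStep (Fin.append a b) (Fin.append 1 b) :=
    reflTransGen_of_eqOn (K := Set.range (Fin.natAdd k))
      (by simpa [← Set.range_comp, Function.comp_def] using hb) (by rintro _ ⟨i, rfl⟩; simp)
  have reorder := reflTransGen_comp_perm (Fin.append (1 : Fin k → G) b)
    ((finCongr (Nat.add_comm k n)).trans finAddFlip)
  rw [Equiv.coe_trans, ← Function.comp_assoc, Fin.append_comp_finAddFlip] at reorder
  exact keep_a.trans (keep_b.trans reorder)
end
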